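/- (Theorem 1) Let D be any generating class (hierarchical model) and let b satisfy deg b = 2, F_b ≠ ∅ and Δ̄_b ≠ ∅. Then the number of elements of the fiber is exactly |F_b| = 2^{c(b)−1}, where c(b) is the number of connected components of the induced subgraph G(Δ̄_b). -/

import Mathlib

open Finset

variable {m : ℕ}

/-- The set of cells of an `m`-way contingency table with `I δ` levels for variable `δ`. -/
abbrev Cell (I : Fin m → ℕ) := ∀ δ : Fin m, Fin (I δ)

/-- Marginal cells for a subset `D` of the variables. -/
abbrev PCell (I : Fin m → ℕ) (D : Finset (Fin m)) := ∀ δ : {x // x ∈ D}, Fin (I δ.1)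

/-- Restriction of a cell to the variables in `D`. -/
def restrictC (I : Fin m → ℕ) (D : Finset (Fin m)) (i : Cell I) : PCell I D :=
  fun δ => i δ.1

/-- The `D`-marginal of a contingency table `n`. -/
def margin (I : Fin m → ℕ) (n : Cell I → ℕ) (D : Finset (Fin m)) (f : PCell I D) : ℕ :=
  ∑ i : Cell I, if restrictC I D i = f then n i else 0

/-- The fiber of `b = A n₀`, i.e. all tables sharing all `D`-marginals, `D ∈ 𝒟`, with `n₀`. -/
def fiber (I : Fin m → ℕ) (𝒟 : Finset (Finset (Fin m))) (n₀ : Cell I → ℕ) :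
    Set (Cell I → ℕ) :=
  {n | ∀ D ∈ 𝒟, ∀ f : PCell I D, margin I n D f = margin I n₀ D f}

/-- Sample size (total frequency) of a table. -/
def total (I : Fin m → ℕ) (n : Cell I → ℕ) : ℕ := ∑ i : Cell I, n i

/-- The one-dimensional marginal of `n` for variable `δ` at level `v`. -/
def margin1 (I : Fin m → ℕ) (n : Cell I → ℕ) (δ : Fin m) (v : Fin (I δ)) : ℕ :=
  ∑ i : Cell I, if i δ = v then n i else 0

/-- For a degree two fiber represented by `n₀`, variable `δ` is degenerate if a single
level has one-dimensional marginal `2`. -/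
def Degenerate (I : Fin m → ℕ) (n₀ : Cell I → ℕ) (δ : Fin m) : Prop :=
  ∃ v : Fin (I δ), margin1 I n₀ δ v = 2

/-- Variable `δ` is non-degenerate if two distinct levels each have one-dimensional
marginal `1`. -/
def Nondegenerate (I : Fin m → ℕ) (n₀ : Cell I → ℕ) (δ : Fin m) : Prop :=
  ∃ v w : Fin (I δ), v ≠ w ∧ margin1 I n₀ δ v = 1 ∧ margin1 I n₀ δ w = 1

/-- The independence graph of a generating class `𝒟`: an edge between two distinct
variables iff some `D ∈ 𝒟` contains both. -/
def indepGraph (𝒟 : Finset (Finset (Fin m))) : SimpleGraph (Fin m) :=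
  SimpleGraph.fromRel (fun a b => ∃ D ∈ 𝒟, a ∈ D ∧ b ∈ D)

/-- The set of non-degenerate variables `Δ̄_b`. -/
def ndSet (I : Fin m → ℕ) (n₀ : Cell I → ℕ) : Set (Fin m) :=
  {δ | Nondegenerate I n₀ δ}

/-!
A table of sample size two is the table `pairTable a b` of a pair of cells, and another such
table `pairTable x y` has the same `D`-marginals iff `(x_D, y_D)` is `(a_D, b_D)` or
`(b_D, a_D)`. The covering property forces `{x δ, y δ} = {a δ, b δ}` for every variable, so
only the non-degenerate variables (those with `a δ ≠ b δ`) carry a choice: which of `a δ`, `b δ`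
the cell `x` takes. Two adjacent non-degenerate variables lie in a common `D`, so this choice is
constant on connected components of `G(Δ̄_b)`, and conversely any bit per component is realised.
Flipping every bit only swaps `x` and `y`, so normalising the bit of one component gives a
bijection between the fiber and the `2 ^ (c(b) - 1)` remaining choices.
-/

section PairTable

variable {α β : Type*} [DecidableEq α]

def pairTable (x y : α) : α → ℕ := fun z => Multiset.count z {x, y}

lemma pairTable_apply (x y z : α) :
    pairTable x y z = (if x = z then 1 else 0) + if y = z then 1 else 0 := by
  simp [pairTable, Multiset.count_cons, Multiset.count_singleton, eq_comm, add_comm]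

lemma pairTable_comm (x y : α) : pairTable x y = pairTable y x := by
  unfold pairTable
  rw [Multiset.pair_comm]

lemma pairTable_eq_pairTable_iff {p q r s : α} :
    pairTable p q = pairTable r s ↔ p = r ∧ q = s ∨ p = s ∧ q = r := by
  refine ⟨fun h => ?_, ?_⟩
  · have h' : ({p, q} : Multiset α) = {r, s} := Multiset.ext' (congrFun h)
    rcases Multiset.cons_eq_cons.mp h' with ⟨rfl, hqs⟩ | ⟨-, cs, hq, hs⟩
    · exact .inl ⟨rfl, Multiset.singleton_inj.mp hqs⟩
    · rw [Multiset.singleton_eq_cons_iff] at hq hs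
      exact .inr ⟨hs.1.symm, hq.1⟩
  · rintro (⟨rfl, rfl⟩ | ⟨rfl, rfl⟩)
    exacts [rfl, pairTable_comm _ _]

lemma exists_eq_pairTable_of_sum_eq_two [Fintype α] {n : α → ℕ} (h : ∑ i, n i = 2) :
    ∃ x y, n = pairTable x y := by
  set M := Finsupp.toMultiset (Finsupp.equivFunOnFinite.symm n)
  have hM : Multiset.card M = 2 := by
    rw [Finsupp.card_toMultiset, Finsupp.sum_fintype _ _ fun _ => rfl]
    exact h
  obtain ⟨x, y, hxy⟩ := Multiset.card_eq_two.mp hM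
  refine ⟨x, y, funext fun z => ?_⟩
  rw [pairTable, ← hxy, Finsupp.count_toMultiset]
  rfl

lemma sum_ite_pairTable [Fintype α] [DecidableEq β] (g : α → β) (x y : α) (c : β) :
    (∑ i, if g i = c then pairTable x y i else 0) = pairTable (g x) (g y) c := by
  have hsingle (z : α) :
      (∑ i, if g i = c then (if z = i then 1 else 0) else 0 : ℕ) = if g z = c then 1 else 0 := by
    rw [Fintype.sum_eq_single z] <;> grind
  simp only [pairTable_apply, ite_add_zero, Finset.sum_add_distrib, hsingle]

lemma exists_ne_pairTable_eq_one_iff {p q : α} :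
    (∃ v w, v ≠ w ∧ pairTable p q v = 1 ∧ pairTable p q w = 1) ↔ p ≠ q := by
  refine ⟨?_, fun h => ⟨p, q, h, ?_, ?_⟩⟩
  · rintro ⟨v, w, hvw, hv, hw⟩ rfl
    simp only [pairTable_apply] at hv hw
    grind
  · simp [pairTable_apply, h.symm]
  · simp [pairTable_apply, h]

end PairTable

lemma ncard_setOf_apply_eq_true {K : Type*} [Finite K] (c₀ : K) :
    {s : K → Bool | s c₀ = true}.ncard = 2 ^ (Nat.card K - 1) := by
  classical
  have := Fintype.ofFinite K
  have h := Fintype.card_filter_piFinset_const_eq_of_mem (univ : Finset Bool) c₀ (mem_univ true)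
  rw [Fintype.piFinset_univ, card_univ, Fintype.card_bool] at h
  rw [Nat.card_eq_fintype_card, ← h, ← coe_filter_univ, Set.ncard_coe_finset]

section Recombination

variable {I : Fin m → ℕ} {𝒟 : Finset (Finset (Fin m))}

lemma margin_pairTable (x y : Cell I) (D : Finset (Fin m)) :
    margin I (pairTable x y) D = pairTable (restrictC I D x) (restrictC I D y) :=
  funext (sum_ite_pairTable _ x y)

lemma margin1_pairTable (x y : Cell I) (δ : Fin m) :
    margin1 I (pairTable x y) δ = pairTable (x δ) (y δ) :=
  funext (sum_ite_pairTable (· δ) x y)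

lemma nondegenerate_pairTable_iff {a b : Cell I} {δ : Fin m} :
    Nondegenerate I (pairTable a b) δ ↔ a δ ≠ b δ := by
  rw [Nondegenerate, margin1_pairTable, exists_ne_pairTable_eq_one_iff]

lemma ndSet_pairTable (a b : Cell I) : ndSet I (pairTable a b) = {δ | a δ ≠ b δ} :=
  Set.ext fun _ => nondegenerate_pairTable_iff

lemma indepGraph_adj_iff {u v : Fin m} :
    (indepGraph 𝒟).Adj u v ↔ u ≠ v ∧ ∃ D ∈ 𝒟, u ∈ D ∧ v ∈ D := by
  rw [indepGraph, SimpleGraph.fromRel_adj]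
  grind

def SameMarginPairs (𝒟 : Finset (Finset (Fin m))) (a b x y : Cell I) : Prop :=
  ∀ D ∈ 𝒟, restrictC I D x = restrictC I D a ∧ restrictC I D y = restrictC I D b ∨
    restrictC I D x = restrictC I D b ∧ restrictC I D y = restrictC I D a

lemma pairTable_mem_fiber_pairTable_iff {a b x y : Cell I} :
    pairTable x y ∈ fiber I 𝒟 (pairTable a b) ↔ SameMarginPairs 𝒟 a b x y := by
  refine forall₂_congr fun D _ => ?_
  rw [← funext_iff, margin_pairTable, margin_pairTable, pairTable_eq_pairTable_iff]

lemma SameMarginPairs.apply {a b x y : Cell I} (hcov : ∀ δ, ∃ D ∈ 𝒟, δ ∈ D)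
    (h : SameMarginPairs 𝒟 a b x y) (δ : Fin m) :
    x δ = a δ ∧ y δ = b δ ∨ x δ = b δ ∧ y δ = a δ := by
  obtain ⟨D, hD, hδ⟩ := hcov δ
  rcases h D hD with ⟨hx, hy⟩ | ⟨hx, hy⟩
  exacts [.inl ⟨congrFun hx ⟨δ, hδ⟩, congrFun hy ⟨δ, hδ⟩⟩,
    .inr ⟨congrFun hx ⟨δ, hδ⟩, congrFun hy ⟨δ, hδ⟩⟩]

variable (𝒟) in
/-- `G(Δ̄_b)` for `b` the marginals of `pairTable a b`, by `ndSet_pairTable`. -/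
abbrev diffGraph (a b : Cell I) : SimpleGraph {δ | a δ ≠ b δ} :=
  (indepGraph 𝒟).induce {δ | a δ ≠ b δ}

lemma connectedComponentMk_diffGraph_eq {a b : Cell I} {D : Finset (Fin m)} (hD : D ∈ 𝒟)
    {u v : {δ | a δ ≠ b δ}} (hu : u.1 ∈ D) (hv : v.1 ∈ D) :
    (diffGraph 𝒟 a b).connectedComponentMk u = (diffGraph 𝒟 a b).connectedComponentMk v := by
  obtain rfl | huv := eq_or_ne u v
  · rfl
  · exact SimpleGraph.ConnectedComponent.connectedComponentMk_eq_of_adj <|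
      indepGraph_adj_iff.mpr ⟨Subtype.coe_ne_coe.mpr huv, D, hD, hu, hv⟩

lemma SameMarginPairs.eq_left_iff_of_adj {a b x y : Cell I} (h : SameMarginPairs 𝒟 a b x y)
    {u v : {δ | a δ ≠ b δ}} (huv : (diffGraph 𝒟 a b).Adj u v) :
    x u = a u ↔ x v = a v := by
  obtain ⟨-, D, hD, hu, hv⟩ := indepGraph_adj_iff.mp huv
  rcases h D hD with ⟨hx, -⟩ | ⟨hx, -⟩
  · exact iff_of_true (congrFun hx ⟨u, hu⟩) (congrFun hx ⟨v, hv⟩)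
  · refine iff_of_false (fun hu' => u.2 ?_) (fun hv' => v.2 ?_)
    exacts [hu'.symm.trans (congrFun hx ⟨u, hu⟩), hv'.symm.trans (congrFun hx ⟨v, hv⟩)]

def recombine (a b : Cell I) (s : (diffGraph 𝒟 a b).ConnectedComponent → Bool) : Cell I :=
  fun δ => if h : a δ = b δ then a δ
    else if s ((diffGraph 𝒟 a b).connectedComponentMk ⟨δ, h⟩) then a δ else b δ

lemma recombine_apply_of_ne {a b : Cell I} (s : (diffGraph 𝒟 a b).ConnectedComponent → Bool)
    {δ : Fin m} (h : a δ ≠ b δ) :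
    recombine a b s δ = if s ((diffGraph 𝒟 a b).connectedComponentMk ⟨δ, h⟩) then a δ else b δ :=
  dif_neg h

lemma recombine_apply_of_mem {a b : Cell I} (s : (diffGraph 𝒟 a b).ConnectedComponent → Bool)
    {D : Finset (Fin m)} (hD : D ∈ 𝒟) {δ₁ : Fin m} (hδ₁D : δ₁ ∈ D) (hδ₁ : a δ₁ ≠ b δ₁)
    {δ : Fin m} (hδ : δ ∈ D) :
    recombine a b s δ =
      if s ((diffGraph 𝒟 a b).connectedComponentMk ⟨δ₁, hδ₁⟩) then a δ else b δ := by
  by_cases h : a δ = b δ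
  · rw [recombine, dif_pos h, h, ite_self]
  · rw [recombine_apply_of_ne s h,
      connectedComponentMk_diffGraph_eq hD (u := ⟨δ, h⟩) (v := ⟨δ₁, hδ₁⟩) hδ hδ₁D]

lemma recombine_injective (a b : Cell I) :
    Function.Injective (recombine (𝒟 := 𝒟) a b) := by
  intro s s' h
  funext c
  induction c using SimpleGraph.ConnectedComponent.ind with
  | h u =>
    obtain ⟨δ, hδ⟩ := u
    have hδ' : a δ ≠ b δ := hδ
    have hu := congrFun h δ
    rw [recombine_apply_of_ne s hδ', recombine_apply_of_ne s' hδ'] at hu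
    revert hu
    cases s _ <;> cases s' _ <;> simp [hδ', hδ'.symm]

lemma sameMarginPairs_recombine {a b : Cell I}
    (s : (diffGraph 𝒟 a b).ConnectedComponent → Bool) :
    SameMarginPairs 𝒟 a b (recombine a b s) (recombine a b (!s ·)) := by
  intro D hD
  by_cases hsplit : ∃ δ₁ ∈ D, a δ₁ ≠ b δ₁
  · obtain ⟨δ₁, hδ₁D, hδ₁⟩ := hsplit
    have hx := fun δ (hδ : δ ∈ D) => recombine_apply_of_mem s hD hδ₁D hδ₁ hδ
    have hy := fun δ (hδ : δ ∈ D) => recombine_apply_of_mem (!s ·) hD hδ₁D hδ₁ hδ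
    cases hs : s ((diffGraph 𝒟 a b).connectedComponentMk ⟨δ₁, hδ₁⟩)
    · right
      constructor <;> funext ⟨δ, hδ⟩ <;> simp [restrictC, hx δ hδ, hy δ hδ, hs]
    · left
      constructor <;> funext ⟨δ, hδ⟩ <;> simp [restrictC, hx δ hδ, hy δ hδ, hs]
  · push Not at hsplit
    left
    constructor <;> funext ⟨δ, hδ⟩ <;> simp [restrictC, recombine, hsplit δ hδ]

lemma SameMarginPairs.exists_recombine {a b x y : Cell I} (hcov : ∀ δ, ∃ D ∈ 𝒟, δ ∈ D)
    (h : SameMarginPairs 𝒟 a b x y) :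
    ∃ s : (diffGraph 𝒟 a b).ConnectedComponent → Bool,
      recombine a b s = x ∧ recombine a b (!s ·) = y := by
  let s : (diffGraph 𝒟 a b).ConnectedComponent → Bool :=
    SimpleGraph.ConnectedComponent.lift (fun u => decide (x u = a u)) fun u v p hp => by
      clear hp
      induction p with
      | nil => rfl
      | cons huv _ ih => exact (decide_eq_decide.mpr (h.eq_left_iff_of_adj huv)).trans ih
  refine ⟨s, funext fun δ => ?_, funext fun δ => ?_⟩ <;>
    by_cases hδ : a δ = b δ <;>
    simp only [recombine, hδ, s, dite_true, dite_false, SimpleGraph.ConnectedComponent.lift_mk] <;>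
    grind [h.apply hcov δ]

lemma ncard_fiber_pairTable (hcov : ∀ δ, ∃ D ∈ 𝒟, δ ∈ D) {a b : Cell I} {δ₀ : Fin m}
    (h₀ : a δ₀ ≠ b δ₀)
    (hdeg : ∀ n ∈ fiber I 𝒟 (pairTable a b), total I n = 2) :
    (fiber I 𝒟 (pairTable a b)).ncard =
      2 ^ (Nat.card (diffGraph 𝒟 a b).ConnectedComponent - 1) := by
  set c₀ := (diffGraph 𝒟 a b).connectedComponentMk ⟨δ₀, h₀⟩
  let table (s : (diffGraph 𝒟 a b).ConnectedComponent → Bool) : Cell I → ℕ :=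
    pairTable (recombine a b s) (recombine a b (!s ·))
  have himage : fiber I 𝒟 (pairTable a b) = table '' {s | s c₀ = true} := by
    ext n
    refine ⟨fun hn => ?_, ?_⟩
    · obtain ⟨x, y, rfl⟩ := exists_eq_pairTable_of_sum_eq_two (hdeg n hn)
      obtain ⟨s, rfl, rfl⟩ := (pairTable_mem_fiber_pairTable_iff.mp hn).exists_recombine hcov
      cases hs : s c₀
      · refine ⟨(!s ·), by simp [hs], ?_⟩
        simp only [table, Bool.not_not]
        exact pairTable_comm _ _
      · exact ⟨s, hs, rfl⟩
    · rintro ⟨s, -, rfl⟩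
      exact pairTable_mem_fiber_pairTable_iff.mpr (sameMarginPairs_recombine s)
  have hinj : Set.InjOn table {s | s c₀ = true} := by
    intro s (hs : s c₀ = true) s' (hs' : s' c₀ = true) h
    rcases pairTable_eq_pairTable_iff.mp h with ⟨h, -⟩ | ⟨h, -⟩
    · exact recombine_injective a b h
    · have hss' := congrFun (recombine_injective a b h) c₀
      simp [hs, hs'] at hss'
  rw [himage, hinj.ncard_image, ncard_setOf_apply_eq_true]

end Recombination

theorem statement3_general (I : Fin m → ℕ)
    (𝒟 : Finset (Finset (Fin m))) (hcov : ∀ δ : Fin m, ∃ D ∈ 𝒟, δ ∈ D)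
    (n₀ : Cell I → ℕ)
    (hdeg : ∀ n ∈ fiber I 𝒟 n₀, total I n = 2)
    (hnd : ∃ δ, Nondegenerate I n₀ δ) :
    (fiber I 𝒟 n₀).ncard =
      2 ^ (Nat.card ((indepGraph 𝒟).induce (ndSet I n₀)).ConnectedComponent - 1) := by
  obtain ⟨a, b, rfl⟩ := exists_eq_pairTable_of_sum_eq_two (hdeg n₀ fun _ _ _ => rfl)
  obtain ⟨δ₀, hδ₀⟩ := hnd
  rw [ndSet_pairTable]
  exact ncard_fiber_pairTable hcov (nondegenerate_pairTable_iff.mp hδ₀) hdeg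

/-- Theorem 1: a degree two fiber with `Δ̄_b ≠ ∅` has exactly
`2 ^ (c(b) - 1)` elements, where `c(b)` is the number of connected components of the
induced subgraph `G(Δ̄_b)` of the independence graph. -/
theorem statement3 (I : Fin m → ℕ) (hI : ∀ δ, 2 ≤ I δ)
    (𝒟 : Finset (Finset (Fin m))) (hcov : ∀ δ : Fin m, ∃ D ∈ 𝒟, δ ∈ D)
    (n₀ : Cell I → ℕ)
    (hdeg : ∀ n ∈ fiber I 𝒟 n₀, total I n = 2)
    (hnd : ∃ δ, Nondegenerate I n₀ δ) :
    (fiber I 𝒟 n₀).ncard =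
      2 ^ (Nat.card ((indepGraph 𝒟).induce (ndSet I n₀)).ConnectedComponent - 1) :=
  statement3_general I 𝒟 hcov n₀ hdeg hnd
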